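/- Reweighted Talagrand inequality: if π = Σᵢ wᵢ πᵢ with wᵢ > 0 and each πᵢ satisfies T_c(ν, πᵢ) ≤ C·KL(ν‖πᵢ) for all probability measures ν, then for every μ ≪ π with KL(μ‖π) < ∞, inf_{π̃ ∈ C} T_c(μ, π̃) ≤ C·(KL(μ‖π) − KL(λ*‖w)) ≤ C·KL(μ‖π). -/

import Mathlib

open MeasureTheory ENNReal Classical

/-- Relative entropy `KL(μ‖ν) := ∫ log (dμ/dν) dμ` if `μ ≪ ν` (and the integral is
well-defined), `+∞` otherwise. -/
noncomputable def klDiv {X : Type*} [MeasurableSpace X] (μ ν : Measure X) : ℝ≥0∞ :=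
  if μ ≪ ν ∧ Integrable (MeasureTheory.llr μ ν) μ
  then ENNReal.ofReal (∫ x, MeasureTheory.llr μ ν x ∂μ) else ∞

/-- Optimal transport cost `T_c(μ, ν) := inf over couplings γ of ∫ c dγ`. -/
noncomputable def transportCost {X : Type*} [MeasurableSpace X]
    (c : X → X → ℝ≥0∞) (μ ν : Measure X) : ℝ≥0∞ :=
  ⨅ (γ : Measure (X × X)) (_ : γ.fst = μ ∧ γ.snd = ν), ∫⁻ p, c p.1 p.2 ∂γ

/-- The set of reweighted mixtures `C = {∑ i, λᵢ πᵢ : λ ∈ Δₘ}`. -/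
def mixSet {X : Type*} [MeasurableSpace X] {m : ℕ} (π : Fin m → Measure X) :
    Set (Measure X) :=
  {ν | ∃ l : Fin m → ℝ≥0∞, (∑ i, l i) = 1 ∧ ν = ∑ i, l i • π i}

/-!
Write `f = dμ/dπ` and `μᵢ = (wᵢ f / λ*ᵢ) · πᵢ`. Then `μ = ∑ λ*ᵢ μᵢ` and `∑ λ*ᵢ = 1`, so
`∑ λ*ᵢ πᵢ ∈ C`, and since couplings of the components mix into a coupling of the mixtures,
`T_c(μ, ∑ λ*ᵢ πᵢ) ≤ ∑ λ*ᵢ T_c(μᵢ, πᵢ) ≤ C ∑ λ*ᵢ KL(μᵢ‖πᵢ)`. The last sum equals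
`KL(μ‖π) - KL(λ*‖w)` by the chain rule, which comes from integrating the pointwise identity
`(r t) log (r t) = r (t log t) + (r log r) t` with `r = wᵢ / λ*ᵢ` and `t = f` against each `πᵢ`.
-/

open Real (log)

section TransportCost

variable {X : Type*} [MeasurableSpace X] (c : X → X → ℝ≥0∞)

theorem transportCost_le_lintegral {μ ν : Measure X} {γ : Measure (X × X)}
    (hγ₁ : γ.fst = μ) (hγ₂ : γ.snd = ν) : transportCost c μ ν ≤ ∫⁻ p, c p.1 p.2 ∂γ :=
  iInf₂_le γ ⟨hγ₁, hγ₂⟩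

theorem transportCost_zero_zero : transportCost c 0 0 = 0 :=
  nonpos_iff_eq_zero.mp <| (transportCost_le_lintegral c Measure.fst_zero Measure.snd_zero).trans_eq
    (lintegral_zero_measure _)

theorem transportCost_add_le (μ₁ μ₂ ν₁ ν₂ : Measure X) :
    transportCost c (μ₁ + μ₂) (ν₁ + ν₂) ≤ transportCost c μ₁ ν₁ + transportCost c μ₂ ν₂ := by
  refine ENNReal.le_iInf_add_iInf fun γ₁ γ₂ => ?_
  by_cases h₁ : γ₁.fst = μ₁ ∧ γ₁.snd = ν₁
  · by_cases h₂ : γ₂.fst = μ₂ ∧ γ₂.snd = ν₂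
    · rw [iInf_pos h₁, iInf_pos h₂, ← lintegral_add_measure]
      exact transportCost_le_lintegral c (by rw [Measure.fst_add, h₁.1, h₂.1])
        (by rw [Measure.snd_add, h₁.2, h₂.2])
    · simp [iInf_neg h₂]
  · simp [iInf_neg h₁]

theorem transportCost_smul_le {a : ℝ≥0∞} (ha : a ≠ ∞) (μ ν : Measure X) :
    transportCost c (a • μ) (a • ν) ≤ a * transportCost c μ ν := by
  rcases eq_or_ne a 0 with rfl | ha₀
  · simp [transportCost_zero_zero]
  simp only [transportCost, ENNReal.mul_iInf_of_ne ha₀ ha]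
  refine le_iInf₂ fun γ hγ => ?_
  rw [← smul_eq_mul, ← lintegral_smul_measure]
  exact transportCost_le_lintegral c (by rw [Measure.fst, Measure.map_smul, ← Measure.fst, hγ.1])
    (by rw [Measure.snd, Measure.map_smul, ← Measure.snd, hγ.2])

theorem transportCost_sum_smul_le {ι : Type*} (s : Finset ι) {a : ι → ℝ≥0∞} (ha : ∀ i ∈ s, a i ≠ ∞)
    (μ ν : ι → Measure X) :
    transportCost c (∑ i ∈ s, a i • μ i) (∑ i ∈ s, a i • ν i) ≤
      ∑ i ∈ s, a i * transportCost c (μ i) (ν i) := by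
  induction s using Finset.cons_induction with
  | empty => simp [transportCost_zero_zero]
  | cons j s hj ih =>
    rw [Finset.forall_mem_cons] at ha
    simp only [Finset.sum_cons]
    exact (transportCost_add_le c _ _ _ _).trans
      (add_le_add (transportCost_smul_le c ha.1 _ _) (ih ha.2))

end TransportCost

theorem mul_mul_log_mul (r t : ℝ) : r * t * log (r * t) = r * (t * log t) + r * log r * t := by
  have h := Real.negMulLog_mul r t
  simp only [Real.negMulLog] at h
  linarith

section MulLog

variable {X : Type*} [MeasurableSpace X] {ν : Measure X} {F : X → ℝ}

theorem integrable_mul_mul_log_mul (hF : Integrable F ν)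
    (hF_log : Integrable (fun x => F x * log (F x)) ν) (r : ℝ) :
    Integrable (fun x => r * F x * log (r * F x)) ν := by
  simp_rw [mul_mul_log_mul]
  exact (hF_log.const_mul r).add (hF.const_mul _)

theorem integral_mul_mul_log_mul (hF : Integrable F ν)
    (hF_log : Integrable (fun x => F x * log (F x)) ν) (r : ℝ) :
    ∫ x, r * F x * log (r * F x) ∂ν = r * ∫ x, F x * log (F x) ∂ν + r * log r * ∫ x, F x ∂ν := by
  simp_rw [mul_mul_log_mul]
  rw [integral_add (hF_log.const_mul r) (hF.const_mul _), integral_const_mul, integral_const_mul]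

end MulLog

section KullbackLeibler

variable {X : Type*} [MeasurableSpace X]

theorem klDiv_ne_top_iff {μ ν : Measure X} :
    klDiv μ ν ≠ ∞ ↔ μ ≪ ν ∧ Integrable (llr μ ν) μ := by
  refine ⟨fun h => ?_, fun h => by simp [klDiv, if_pos h]⟩
  by_contra hne
  exact h (if_neg hne)

theorem klDiv_withDensity {ν : Measure X} [SigmaFinite ν] {g : X → ℝ≥0∞} (hg : Measurable g)
    (hg_fin : ∫⁻ x, g x ∂ν ≠ ∞)
    (hint : Integrable (fun x => (g x).toReal * log (g x).toReal) ν) :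
    klDiv (ν.withDensity g) ν = ENNReal.ofReal (∫ x, (g x).toReal * log (g x).toReal ∂ν) := by
  have : IsFiniteMeasure (ν.withDensity g) := isFiniteMeasure_withDensity hg_fin
  have hac : ν.withDensity g ≪ ν := withDensity_absolutelyContinuous ν g
  have hφ : (fun x => ((ν.withDensity g).rnDeriv ν x).toReal
      * log ((ν.withDensity g).rnDeriv ν x).toReal) =ᵐ[ν]
      fun x => (g x).toReal * log (g x).toReal := by
    filter_upwards [Measure.rnDeriv_withDensity ν hg] with x hx
    rw [hx]
  rw [klDiv, if_pos ⟨hac, (integrable_rnDeriv_mul_log_iff hac).mp (hint.congr hφ.symm)⟩,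
    ← integral_rnDeriv_mul_log hac, integral_congr_ae hφ]

theorem integral_toReal_mul_log_nonneg {ν : Measure X} [IsProbabilityMeasure ν] {g : X → ℝ≥0∞}
    (hg : Measurable g) (hg_one : ∫⁻ x, g x ∂ν = 1)
    (hint : Integrable (fun x => (g x).toReal * log (g x).toReal) ν) :
    0 ≤ ∫ x, (g x).toReal * log (g x).toReal ∂ν := by
  have hG : Integrable (fun x => (g x).toReal) ν :=
    integrable_toReal_of_lintegral_ne_top hg.aemeasurable (by simp [hg_one])
  have hG_one : ∫ x, (g x).toReal ∂ν = 1 := by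
    rw [integral_toReal hg.aemeasurable (ae_lt_top hg (by simp [hg_one])), hg_one,
      ENNReal.toReal_one]
  calc (0 : ℝ) = ∫ x, ((g x).toReal - 1) ∂ν := by
        rw [integral_sub hG (integrable_const 1), hG_one]; simp
    _ ≤ _ := integral_mono (hG.sub (integrable_const 1)) hint
        fun x => Real.self_sub_one_le_mul_log ENNReal.toReal_nonneg

theorem toReal_klDiv_withDensity {ν : Measure X} [IsProbabilityMeasure ν] {g : X → ℝ≥0∞}
    (hg : Measurable g) (hg_one : ∫⁻ x, g x ∂ν = 1)
    (hint : Integrable (fun x => (g x).toReal * log (g x).toReal) ν) :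
    (klDiv (ν.withDensity g) ν).toReal = ∫ x, (g x).toReal * log (g x).toReal ∂ν := by
  rw [klDiv_withDensity hg (by simp [hg_one]) hint,
    ENNReal.toReal_ofReal (integral_toReal_mul_log_nonneg hg hg_one hint)]

theorem klDiv_withDensity_ne_top {ν : Measure X} [SigmaFinite ν] {g : X → ℝ≥0∞} (hg : Measurable g)
    (hg_fin : ∫⁻ x, g x ∂ν ≠ ∞)
    (hint : Integrable (fun x => (g x).toReal * log (g x).toReal) ν) :
    klDiv (ν.withDensity g) ν ≠ ∞ := by
  rw [klDiv_withDensity hg hg_fin hint]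
  exact ENNReal.ofReal_ne_top

theorem toReal_klDiv_eq_integral_rnDeriv_mul_log {μ ν : Measure X} [IsProbabilityMeasure μ]
    [IsProbabilityMeasure ν] (hμν : μ ≪ ν)
    (hint : Integrable (fun x => (μ.rnDeriv ν x).toReal * log (μ.rnDeriv ν x).toReal) ν) :
    (klDiv μ ν).toReal = ∫ x, (μ.rnDeriv ν x).toReal * log (μ.rnDeriv ν x).toReal ∂ν := by
  conv_lhs => rw [← Measure.withDensity_rnDeriv_eq μ ν hμν]
  exact toReal_klDiv_withDensity (Measure.measurable_rnDeriv μ ν)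
    (by rw [Measure.lintegral_rnDeriv hμν, measure_univ]) hint

end KullbackLeibler

section Discrete

variable {ι : Type*} [Fintype ι] [MeasurableSpace ι] [MeasurableSingletonClass ι]

theorem sum_smul_dirac_eq_withDensity {a b : ι → ℝ≥0∞} (hb₀ : ∀ i, b i ≠ 0) (hb : ∀ i, b i ≠ ∞) :
    ∑ i, a i • Measure.dirac i = (∑ i, b i • Measure.dirac i).withDensity fun i => a i / b i := by
  rw [← Measure.sum_fintype fun i => b i • Measure.dirac i, withDensity_sum, Measure.sum_fintype]
  refine Finset.sum_congr rfl fun i _ => ?_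
  rw [withDensity_smul_measure, dirac_withDensity' .of_discrete i, smul_smul,
    ENNReal.mul_div_cancel (hb₀ i) (hb i)]

theorem integral_sum_smul_dirac {b : ι → ℝ≥0∞} (hb : ∀ i, b i ≠ ∞) (f : ι → ℝ) :
    ∫ i, f i ∂(∑ i, b i • Measure.dirac i) = ∑ i, (b i).toReal * f i := by
  have (i : ι) : IsFiniteMeasure (b i • Measure.dirac i) := Measure.smul_finite _ (hb i)
  rw [integral_finsetSum_measure fun i _ => Integrable.of_finite]
  simp [integral_smul_measure]

theorem lintegral_div_sum_smul_dirac {a b : ι → ℝ≥0∞} (hb₀ : ∀ i, b i ≠ 0) (hb : ∀ i, b i ≠ ∞) :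
    ∫⁻ i, a i / b i ∂(∑ i, b i • Measure.dirac i) = ∑ i, a i := by
  rw [lintegral_finsetSum_measure]
  refine Finset.sum_congr rfl fun i _ => ?_
  rw [lintegral_smul_measure, lintegral_dirac, smul_eq_mul, ENNReal.mul_div_cancel (hb₀ i) (hb i)]

theorem klDiv_sum_smul_dirac_ne_top {a b : ι → ℝ≥0∞} (ha : ∀ i, a i ≠ ∞) (hb₀ : ∀ i, b i ≠ 0)
    (hb : ∀ i, b i ≠ ∞) :
    klDiv (∑ i, a i • Measure.dirac i) (∑ i, b i • Measure.dirac i) ≠ ∞ := by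
  have : IsFiniteMeasure (∑ i, b i • Measure.dirac i) :=
    ⟨by simpa [Measure.coe_finsetSum] using fun i => (hb i).lt_top⟩
  rw [sum_smul_dirac_eq_withDensity hb₀ hb]
  exact klDiv_withDensity_ne_top .of_discrete
    (by rw [lintegral_div_sum_smul_dirac hb₀ hb]; exact ENNReal.sum_ne_top.2 fun i _ => ha i)
    Integrable.of_finite

theorem toReal_klDiv_sum_smul_dirac {a b : ι → ℝ≥0∞} (hb₀ : ∀ i, b i ≠ 0) (hb : ∀ i, b i ≠ ∞)
    (ha_one : ∑ i, a i = 1) (hb_one : ∑ i, b i = 1) :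
    (klDiv (∑ i, a i • Measure.dirac i) (∑ i, b i • Measure.dirac i)).toReal =
      ∑ i, (a i).toReal * log ((a i).toReal / (b i).toReal) := by
  have : IsProbabilityMeasure (∑ i, b i • Measure.dirac i) :=
    ⟨by simp [Measure.coe_finsetSum, hb_one]⟩
  rw [sum_smul_dirac_eq_withDensity hb₀ hb, toReal_klDiv_withDensity .of_discrete
    (by rw [lintegral_div_sum_smul_dirac hb₀ hb, ha_one]) Integrable.of_finite,
    integral_sum_smul_dirac hb]
  refine Finset.sum_congr rfl fun i _ => ?_
  have : (b i).toReal ≠ 0 := ENNReal.toReal_ne_zero.2 ⟨hb₀ i, hb i⟩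
  rw [ENNReal.toReal_div]
  field_simp

end Discrete

section Mixture

variable {X : Type*} [MeasurableSpace X] {ι : Type*} [Fintype ι]
  (w : ι → ℝ≥0∞) (π : ι → Measure X) (μ : Measure X)

local notation "π̄" => ∑ j, w j • π j

noncomputable def mixtureWeight (i : ι) : ℝ≥0∞ := w i * ∫⁻ x, μ.rnDeriv π̄ x ∂(π i)

-- When `mixtureWeight w π μ i = 0` this is the zero measure rather than a probability measure;
-- it only ever occurs multiplied by that weight.
noncomputable def mixtureComponent (i : ι) : Measure X :=
  (π i).withDensity fun x => (mixtureWeight w π μ i)⁻¹ * w i * μ.rnDeriv π̄ x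

variable {w π μ}

theorem smul_le_mixture (i : ι) : w i • π i ≤ π̄ :=
  Finset.single_le_sum (f := fun j => w j • π j) (fun _ _ => Measure.zero_le _) (Finset.mem_univ i)

theorem isProbabilityMeasure_mixture [∀ i, IsProbabilityMeasure (π i)] (hw_one : ∑ i, w i = 1) :
    IsProbabilityMeasure π̄ :=
  ⟨by simp [Measure.coe_finsetSum, hw_one]⟩

theorem sum_mixtureWeight [μ.HaveLebesgueDecomposition π̄] (hμ : μ ≪ π̄) :
    ∑ i, mixtureWeight w π μ i = μ Set.univ := by
  simp_rw [mixtureWeight, ← smul_eq_mul, ← lintegral_smul_measure]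
  rw [← lintegral_finsetSum_measure, Measure.lintegral_rnDeriv hμ]

theorem mixtureWeight_ne_top [IsFiniteMeasure μ] [μ.HaveLebesgueDecomposition π̄] (hμ : μ ≪ π̄)
    (i : ι) : mixtureWeight w π μ i ≠ ∞ :=
  ENNReal.sum_ne_top.1 (sum_mixtureWeight hμ ▸ measure_ne_top μ Set.univ) i (Finset.mem_univ i)

theorem sum_mixtureWeight_eq_one [IsProbabilityMeasure μ] [μ.HaveLebesgueDecomposition π̄]
    (hμ : μ ≪ π̄) : ∑ i, mixtureWeight w π μ i = 1 := by
  rw [sum_mixtureWeight hμ, measure_univ]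

theorem lintegral_mixtureComponent_density (i : ι) (h₀ : mixtureWeight w π μ i ≠ 0)
    (h : mixtureWeight w π μ i ≠ ∞) :
    ∫⁻ x, (mixtureWeight w π μ i)⁻¹ * w i * μ.rnDeriv π̄ x ∂(π i) = 1 := by
  rw [lintegral_const_mul _ (Measure.measurable_rnDeriv _ _), mul_assoc, ← mixtureWeight,
    ENNReal.inv_mul_cancel h₀ h]

theorem isProbabilityMeasure_mixtureComponent (i : ι) (h₀ : mixtureWeight w π μ i ≠ 0)
    (h : mixtureWeight w π μ i ≠ ∞) : IsProbabilityMeasure (mixtureComponent w π μ i) :=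
  ⟨by rw [mixtureComponent, withDensity_apply _ .univ, setLIntegral_univ,
    lintegral_mixtureComponent_density i h₀ h]⟩

theorem mixtureWeight_smul_mixtureComponent (i : ι) (h : mixtureWeight w π μ i ≠ ∞) :
    mixtureWeight w π μ i • mixtureComponent w π μ i = (w i • π i).withDensity (μ.rnDeriv π̄) := by
  rcases eq_or_ne (mixtureWeight w π μ i) 0 with h₀ | h₀
  · rw [h₀, zero_smul, eq_comm, ← Measure.measure_univ_eq_zero, withDensity_apply _ .univ,
      setLIntegral_univ, lintegral_smul_measure, smul_eq_mul, ← mixtureWeight, h₀]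
  · rw [mixtureComponent, ← withDensity_smul' _ _ h, withDensity_smul_measure,
      ← withDensity_smul _ (Measure.measurable_rnDeriv _ _)]
    congr 1
    funext x
    simp only [Pi.smul_apply, smul_eq_mul, ← mul_assoc, ENNReal.mul_inv_cancel h₀ h, one_mul]

theorem sum_mixtureWeight_smul_mixtureComponent [IsFiniteMeasure μ]
    [μ.HaveLebesgueDecomposition π̄] (hμ : μ ≪ π̄) :
    ∑ i, mixtureWeight w π μ i • mixtureComponent w π μ i = μ := by
  simp_rw [mixtureWeight_smul_mixtureComponent _ (mixtureWeight_ne_top hμ _)]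
  rw [← Measure.sum_fintype, ← withDensity_sum, Measure.sum_fintype,
    Measure.withDensity_rnDeriv_eq μ _ hμ]

theorem lintegral_rnDeriv_ne_top_of_mixtureWeight_ne_top {i : ι} (hw₀ : w i ≠ 0)
    (h : mixtureWeight w π μ i ≠ ∞) : ∫⁻ x, μ.rnDeriv π̄ x ∂(π i) ≠ ∞ := fun htop =>
  h (by rw [mixtureWeight, htop, ENNReal.mul_top hw₀])

theorem integrable_mixtureComponent_density_mul_log {i : ι} (hw₀ : w i ≠ 0)
    (h : mixtureWeight w π μ i ≠ ∞)
    (hint : Integrable (fun x => (μ.rnDeriv π̄ x).toReal * log (μ.rnDeriv π̄ x).toReal) (π i)) :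
    Integrable (fun x => ((mixtureWeight w π μ i)⁻¹ * w i * μ.rnDeriv π̄ x).toReal *
      log ((mixtureWeight w π μ i)⁻¹ * w i * μ.rnDeriv π̄ x).toReal) (π i) := by
  simp only [ENNReal.toReal_mul]
  exact integrable_mul_mul_log_mul (integrable_toReal_of_lintegral_ne_top
    (Measure.measurable_rnDeriv _ _).aemeasurable
    (lintegral_rnDeriv_ne_top_of_mixtureWeight_ne_top hw₀ h)) hint _

theorem mixtureWeight_mul_klDiv_mixtureComponent_ne_top (i : ι) [IsFiniteMeasure (π i)]
    (hw₀ : w i ≠ 0) (h : mixtureWeight w π μ i ≠ ∞)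
    (hint : Integrable (fun x => (μ.rnDeriv π̄ x).toReal * log (μ.rnDeriv π̄ x).toReal) (π i)) :
    mixtureWeight w π μ i * klDiv (mixtureComponent w π μ i) (π i) ≠ ∞ := by
  rcases eq_or_ne (mixtureWeight w π μ i) 0 with h₀ | h₀
  · simp [h₀]
  · exact ENNReal.mul_ne_top h (klDiv_withDensity_ne_top (by fun_prop)
      (by simp [lintegral_mixtureComponent_density i h₀ h])
      (integrable_mixtureComponent_density_mul_log hw₀ h hint))

theorem toReal_mixtureWeight_mul_klDiv_mixtureComponent (i : ι) [IsProbabilityMeasure (π i)]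
    (hw₀ : w i ≠ 0) (h : mixtureWeight w π μ i ≠ ∞)
    (hint : Integrable (fun x => (μ.rnDeriv π̄ x).toReal * log (μ.rnDeriv π̄ x).toReal) (π i)) :
    (mixtureWeight w π μ i * klDiv (mixtureComponent w π μ i) (π i)).toReal =
      (w i).toReal * ∫ x, (μ.rnDeriv π̄ x).toReal * log (μ.rnDeriv π̄ x).toReal ∂(π i) -
        (mixtureWeight w π μ i).toReal * log ((mixtureWeight w π μ i).toReal / (w i).toReal) := by
  have hf : Measurable (μ.rnDeriv π̄) := Measure.measurable_rnDeriv _ _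
  have hfin := lintegral_rnDeriv_ne_top_of_mixtureWeight_ne_top hw₀ h
  rcases eq_or_ne (mixtureWeight w π μ i) 0 with h₀ | h₀
  · have hf₀ : μ.rnDeriv π̄ =ᵐ[π i] 0 := by
      refine (lintegral_eq_zero_iff hf).1 ?_
      simpa [mixtureWeight, hw₀] using h₀
    have hI₀ : ∫ x, (μ.rnDeriv π̄ x).toReal * log (μ.rnDeriv π̄ x).toReal ∂(π i) = 0 :=
      integral_eq_zero_of_ae (hf₀.mono fun x hx => by simp [hx])
    simp [h₀, hI₀]
  · have hweight : (mixtureWeight w π μ i).toReal =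
        (w i).toReal * ∫ x, (μ.rnDeriv π̄ x).toReal ∂(π i) := by
      rw [integral_toReal hf.aemeasurable (ae_lt_top hf hfin), mixtureWeight, ENNReal.toReal_mul]
    rw [ENNReal.toReal_mul, mixtureComponent, toReal_klDiv_withDensity (by fun_prop)
      (lintegral_mixtureComponent_density i h₀ h)
      (integrable_mixtureComponent_density_mul_log hw₀ h hint)]
    simp only [ENNReal.toReal_mul]
    rw [integral_mul_mul_log_mul (integrable_toReal_of_lintegral_ne_top hf.aemeasurable hfin) hint,
      ENNReal.toReal_inv]
    have ha : (mixtureWeight w π μ i).toReal ≠ 0 := ENNReal.toReal_ne_zero.2 ⟨h₀, h⟩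
    rw [inv_mul_eq_div, ← inv_div, Real.log_inv]
    field_simp
    linear_combination log ((mixtureWeight w π μ i).toReal / (w i).toReal) * hweight

theorem integral_mixture {g : X → ℝ} (hg : Integrable g π̄) :
    ∫ x, g x ∂π̄ = ∑ i, (w i).toReal * ∫ x, g x ∂(π i) := by
  rw [integral_finsetSum_measure fun i _ => hg.mono_measure (smul_le_mixture i)]
  simp [integral_smul_measure]

theorem klDiv_mixture_eq_add [MeasurableSpace ι] [MeasurableSingletonClass ι]
    [IsProbabilityMeasure μ] [∀ i, IsProbabilityMeasure (π i)]
    (hw₀ : ∀ i, w i ≠ 0) (hw_one : ∑ i, w i = 1) (hKL : klDiv μ π̄ ≠ ∞) :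
    klDiv μ π̄ = klDiv (∑ i, mixtureWeight w π μ i • Measure.dirac i) (∑ i, w i • Measure.dirac i) +
      ∑ i, mixtureWeight w π μ i * klDiv (mixtureComponent w π μ i) (π i) := by
  have : IsProbabilityMeasure π̄ := isProbabilityMeasure_mixture hw_one
  have hw (i : ι) : w i ≠ ∞ := ENNReal.sum_ne_top.1 (hw_one ▸ one_ne_top) i (Finset.mem_univ i)
  obtain ⟨hμ, hllr⟩ := klDiv_ne_top_iff.1 hKL
  have hint := (integrable_rnDeriv_mul_log_iff hμ).2 hllr
  have hint_i (i : ι) := (integrable_smul_measure (hw₀ i) (hw i)).1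
    (hint.mono_measure (smul_le_mixture i))
  have hweight := mixtureWeight_ne_top hμ
  have hdisc := klDiv_sum_smul_dirac_ne_top hweight hw₀ hw
  have hcomp (i : ι) := mixtureWeight_mul_klDiv_mixtureComponent_ne_top i (hw₀ i) (hweight i)
    (hint_i i)
  rw [← ENNReal.toReal_eq_toReal_iff' hKL
      (ENNReal.add_ne_top.2 ⟨hdisc, ENNReal.sum_ne_top.2 fun i _ => hcomp i⟩),
    ENNReal.toReal_add hdisc (ENNReal.sum_ne_top.2 fun i _ => hcomp i),
    ENNReal.toReal_sum fun i _ => hcomp i, toReal_klDiv_sum_smul_dirac hw₀ hw (sum_mixtureWeight_eq_one hμ) hw_one,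
    toReal_klDiv_eq_integral_rnDeriv_mul_log hμ hint, integral_mixture hint]
  simp_rw [toReal_mixtureWeight_mul_klDiv_mixtureComponent _ (hw₀ _) (hweight _) (hint_i _)]
  rw [Finset.sum_sub_distrib]
  ring

end Mixture

theorem reweighted_talagrand_general
    {X : Type*} [MeasurableSpace X]
    (c : X → X → ℝ≥0∞)
    {m : ℕ} (w : Fin m → ℝ≥0∞) (π : Fin m → Measure X) (πmix : Measure X)
    [∀ i, IsProbabilityMeasure (π i)]
    (hw_pos : ∀ i, 0 < w i) (hw_sum : ∑ i, w i = 1)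
    (hmix : πmix = ∑ i, w i • π i)
    (C : ℝ≥0∞)
    (hTal : ∀ i, ∀ ν : Measure X, IsProbabilityMeasure ν →
      transportCost c ν (π i) ≤ C * klDiv ν (π i))
    (μ : Measure X) [IsProbabilityMeasure μ]
    (hKL_fin : klDiv μ πmix ≠ ∞)
    (lam : Fin m → ℝ≥0∞)
    (hlam : ∀ i, lam i = w i * ∫⁻ x, μ.rnDeriv πmix x ∂(π i)) :
    (⨅ ν ∈ mixSet π, transportCost c μ ν) ≤
        C * (klDiv μ πmix -
          klDiv (∑ i, lam i • Measure.dirac i) (∑ i, w i • Measure.dirac i)) ∧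
      C * (klDiv μ πmix -
          klDiv (∑ i, lam i • Measure.dirac i) (∑ i, w i • Measure.dirac i)) ≤
        C * klDiv μ πmix := by
  subst hmix
  obtain rfl : lam = mixtureWeight w π μ := funext hlam
  have : IsProbabilityMeasure (∑ i, w i • π i) := isProbabilityMeasure_mixture hw_sum
  have hμ := (klDiv_ne_top_iff.1 hKL_fin).1
  have hweight := mixtureWeight_ne_top hμ
  have hchain := klDiv_mixture_eq_add (fun i => (hw_pos i).ne') hw_sum hKL_fin
  have hdisc := (ENNReal.add_ne_top.1 (hchain ▸ hKL_fin)).1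
  refine ⟨?_, mul_le_mul_right tsub_le_self C⟩
  calc ⨅ ν ∈ mixSet π, transportCost c μ ν
      ≤ transportCost c (∑ i, mixtureWeight w π μ i • mixtureComponent w π μ i)
          (∑ i, mixtureWeight w π μ i • π i) := by
        rw [sum_mixtureWeight_smul_mixtureComponent hμ]
        exact iInf₂_le _ ⟨_, sum_mixtureWeight_eq_one hμ, rfl⟩
    _ ≤ ∑ i, mixtureWeight w π μ i * transportCost c (mixtureComponent w π μ i) (π i) :=
        transportCost_sum_smul_le c _ (fun i _ => hweight i) _ _
    _ ≤ ∑ i, mixtureWeight w π μ i * (C * klDiv (mixtureComponent w π μ i) (π i)) := by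
        refine Finset.sum_le_sum fun i _ => ?_
        rcases eq_or_ne (mixtureWeight w π μ i) 0 with h₀ | h₀
        · simp [h₀]
        · exact mul_le_mul_right
            (hTal i _ (isProbabilityMeasure_mixtureComponent i h₀ (hweight i))) _
    _ = C * (klDiv μ (∑ i, w i • π i) - klDiv (∑ i, mixtureWeight w π μ i • Measure.dirac i)
          (∑ i, w i • Measure.dirac i)) := by
        rw [hchain, ENNReal.add_sub_cancel_left hdisc, Finset.mul_sum]
        simp_rw [mul_left_comm]

/-- Reweighted Talagrand inequality: if `π = ∑ i, wᵢ πᵢ` and each `πᵢ`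
satisfies `T_c(ν, πᵢ) ≤ C · KL(ν‖πᵢ)`, then for every `μ ≪ π` with `KL(μ‖π) < ∞`,
`inf_{π̃ ∈ C} T_c(μ, π̃) ≤ C · (KL(μ‖π) − KL(λ*‖w)) ≤ C · KL(μ‖π)`. -/
theorem reweighted_talagrand
    {X : Type*} [MeasurableSpace X] [TopologicalSpace X] [PolishSpace X] [BorelSpace X]
    (c : X → X → ℝ≥0∞)
    (hc : LowerSemicontinuous (fun p : X × X => c p.1 p.2))
    {m : ℕ} (w : Fin m → ℝ≥0∞) (π : Fin m → Measure X) (πmix : Measure X)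
    [∀ i, IsProbabilityMeasure (π i)]
    (hw_pos : ∀ i, 0 < w i) (hw_sum : ∑ i, w i = 1)
    (hmix : πmix = ∑ i, w i • π i)
    (C : ℝ≥0∞)
    (hTal : ∀ i, ∀ ν : Measure X, IsProbabilityMeasure ν →
      transportCost c ν (π i) ≤ C * klDiv ν (π i))
    (μ : Measure X) [IsProbabilityMeasure μ]
    (hac : μ ≪ πmix) (hKL_fin : klDiv μ πmix ≠ ∞)
    (lam : Fin m → ℝ≥0∞)
    (hlam : ∀ i, lam i = w i * ∫⁻ x, μ.rnDeriv πmix x ∂(π i)) :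
    (⨅ ν ∈ mixSet π, transportCost c μ ν) ≤
        C * (klDiv μ πmix -
          klDiv (∑ i, lam i • Measure.dirac i) (∑ i, w i • Measure.dirac i)) ∧
      C * (klDiv μ πmix -
          klDiv (∑ i, lam i • Measure.dirac i) (∑ i, w i • Measure.dirac i)) ≤
        C * klDiv μ πmix :=
  reweighted_talagrand_general c w π πmix hw_pos hw_sum hmix C hTal μ hKL_fin lam hlam
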